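/- arXiv:2303.15596 — 3 statements merged into one kernel-verified Lean document; each statement's English description precedes it below -/
import Mathlib

section
/- Let F be an algebraically closed field, G a finite group, and V a finite-dimensional faithful FG-module with G not contained in the scalars of GL(V). Then there exists a nonzero vector v in V such that no element g of G outside Z := Z(GL(V)) ∩ G fixes the line spanned by v. -/
/-- If a finite group `G` acts faithfully and linearly on a finite-dimensional vector space `V`
over an algebraically closed field `F`, and `G` is not contained in the scalars of `GL(V)`,
then there is a nonzero `v ∈ V` such that any `g ∈ G` fixing the line `F·v` acts on `V`
as a scalar (i.e. lies in `Z = Z(GL(V)) ∩ G`). -/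
theorem stmt0 {F : Type*} [Field F] [IsAlgClosed F] {G : Type*} [Group G] [Fintype G]
    {V : Type*} [AddCommGroup V] [Module F V] [FiniteDimensional F V]
    (ρ : Representation F G V) (hfaith : Function.Injective ρ)
    (hnonscalar : ¬ ∀ g : G, ∃ c : F, ρ g = c • (LinearMap.id : V →ₗ[F] V)) :
    ∃ v : V, v ≠ 0 ∧ ∀ g : G,
      (∃ c : F, ρ g v = c • v) → ∃ c : F, ρ g = c • (LinearMap.id : V →ₗ[F] V) := by
  classical
  have hVnt : Nontrivial V := by
    by_contra h
    rw [not_nontrivial_iff_subsingleton] at h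
    exact hnonscalar fun g => ⟨0, LinearMap.ext fun v => Subsingleton.elim _ _⟩
  -- index type: `none` for the zero subspace, `some (g, c)` for eigenspaces of non-scalar g
  let ι := Option ((Σ g : {g : G // ¬ ∃ c : F, ρ g = c • (LinearMap.id : V →ₗ[F] V)},
      {c : F // c ∈ (minpoly F (ρ (g : G) : Module.End F V)).roots.toFinset}))
  haveI : Finite ι := by
    haveI : ∀ g : {g : G // ¬ ∃ c : F, ρ g = c • (LinearMap.id : V →ₗ[F] V)},
        Finite {c : F // c ∈ (minpoly F (ρ (g : G) : Module.End F V)).roots.toFinset} :=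
      fun g => Finite.of_fintype _
    infer_instance
  let p : ι → Subspace F V := fun i => Option.rec ⊥
    (fun x => Module.End.eigenspace (ρ (x.1 : G) : Module.End F V) (x.2 : F)) i
  have hne : ∀ i, p i ≠ ⊤ := by
    rintro (_ | ⟨⟨g, hg⟩, ⟨c, hc⟩⟩) h
    · exact absurd h bot_ne_top
    · refine hg ⟨c, LinearMap.ext fun v => ?_⟩
      have hv : v ∈ Module.End.eigenspace (ρ g : Module.End F V) c := by
        rw [show Module.End.eigenspace (ρ g : Module.End F V) c = p (some ⟨⟨g, hg⟩, ⟨c, hc⟩⟩)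
          from rfl, h]; trivial
      rw [Module.End.mem_eigenspace_iff] at hv
      simpa using hv
  have hcover : ⋃ i, (SetLike.coe (p i)) ≠ Set.univ := by
    intro h
    obtain ⟨i, hi⟩ := Subspace.exists_eq_top_of_iUnion_eq_univ h
    exact hne i hi
  obtain ⟨v, hv⟩ : ∃ v : V, v ∉ ⋃ i, (SetLike.coe (p i)) := by
    by_contra h
    push_neg at h
    exact hcover (Set.eq_univ_of_forall h)
  rw [Set.mem_iUnion] at hv
  push_neg at hv
  have hv0 : v ≠ 0 := by
    intro h
    exact hv none (by simp [h, p])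
  refine ⟨v, hv0, fun g hgv => ?_⟩
  by_contra hg
  obtain ⟨c, hc⟩ := hgv
  have heig : Module.End.HasEigenvalue (ρ g : Module.End F V) c :=
    Module.End.hasEigenvalue_of_hasEigenvector
      ⟨Module.End.mem_eigenspace_iff.mpr hc, hv0⟩
  have hroot : c ∈ (minpoly F (ρ g : Module.End F V)).roots.toFinset := by
    rw [Multiset.mem_toFinset,
      Polynomial.mem_roots (minpoly.ne_zero (Module.End.isIntegral.isIntegral
        (ρ g : Module.End F V)))]
    exact (Module.End.hasEigenvalue_iff_isRoot).mp heig
  exact hv (some ⟨⟨g, hg⟩, ⟨c, hroot⟩⟩) (Module.End.mem_eigenspace_iff.mpr hc)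
end

section
/- Let F be an algebraically closed field, G a finite group acting faithfully on V = F^n, Z = Z(GL(V)) ∩ G, and suppose v ∈ V is a nonzero vector whose line is not fixed by any element of G ∖ Z. For each coset ḡ ∈ G/Z define F(ḡ) := ∏_{h̄ ∈ G/Z ∖ {ḡ}} h̄(v), an element of Sym^{N−1}(V) where N = |G/Z|. Then for every integer j ≥ 1, the N polynomials F(ḡ)^j, ḡ ∈ G/Z, are linearly independent over F. -/
/-!
Write `L ḡ` for the linear form of `ρ(ḡ) v`. These are primes of `F[x_1, …, x_n]`, and `L ā ∣ L b̄`
only if `ρ(ā) v`, `ρ(b̄) v` are proportional, which forces `a⁻¹ b` to fix the line of `v`, i.e.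
`ā = b̄`. In a relation `∑ c_h̄ F(h̄)^j = 0`, `L ḡ` divides every `F(h̄)` with `h̄ ≠ ḡ`, hence divides
`c_ḡ F(ḡ)^j`; since `F(ḡ)` is a product of primes not divisible by `L ḡ`, this forces `c_ḡ = 0`.
-/

open MvPolynomial

section LinearForm

variable {R : Type*} {n : ℕ}

noncomputable def linearForm [CommSemiring R] (u : Fin n → R) : MvPolynomial (Fin n) R :=
  ∑ i, C (u i) * X i

theorem linearForm_eq_sumSMulX [CommRing R] (u : Fin n → R) :
    linearForm u = sumSMulX (Finsupp.equivFunOnFinite.symm u) := by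
  simp [linearForm, sumSMulX, Finsupp.linearCombination_apply, Finsupp.sum_fintype, smul_eq_C_mul]

theorem coeff_single_linearForm [CommRing R] (u : Fin n → R) (i : Fin n) :
    (linearForm u).coeff (Finsupp.single i 1) = u i := by
  rw [linearForm_eq_sumSMulX, coeff_sumSMulX]
  rfl

variable {K : Type*} [Field K]

theorem irreducible_linearForm {u : Fin n → K} (hu : u ≠ 0) : Irreducible (linearForm u) := by
  obtain ⟨i, hi⟩ := Function.ne_iff.mp hu
  rw [linearForm_eq_sumSMulX]
  refine irreducible_sumSMulX _ ⟨i, by simpa using hi⟩ fun r hr => ?_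
  exact (ne_zero_of_dvd_ne_zero hi (hr i)).isUnit

theorem prime_linearForm {u : Fin n → K} (hu : u ≠ 0) : Prime (linearForm u) :=
  (irreducible_linearForm hu).prime

theorem exists_eq_smul_of_linearForm_dvd {u w : Fin n → K} (hu : u ≠ 0) (hw : w ≠ 0)
    (h : linearForm u ∣ linearForm w) : ∃ c : K, w = c • u := by
  obtain ⟨U, hU⟩ := (irreducible_linearForm hu).associated_of_dvd (irreducible_linearForm hw) h
  obtain ⟨c, -, hc⟩ := isUnit_iff_eq_C_of_isReduced.mp U.isUnit
  refine ⟨c, funext fun i => ?_⟩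
  rw [← coeff_single_linearForm w, ← hU, hc, mul_comm, coeff_C_mul, coeff_single_linearForm,
    Pi.smul_apply, smul_eq_mul]

end LinearForm

theorem linearIndependent_prod_erase_pow {K A ι : Type*} [Field K] [CommRing A] [Algebra K A]
    [Fintype ι] [DecidableEq ι] {L : ι → A} (hL : ∀ i, Prime (L i))
    (hdvd : ∀ i k, L i ∣ L k → i = k) {j : ℕ} (hj : j ≠ 0) :
    LinearIndependent K (fun i => (∏ k ∈ Finset.univ.erase i, L k) ^ j) := by
  rw [Fintype.linearIndependent_iff]
  intro f hf i
  by_contra hfi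
  have hothers : L i ∣ ∑ k ∈ Finset.univ.erase i, f k • (∏ l ∈ Finset.univ.erase k, L l) ^ j := by
    refine Finset.dvd_sum fun k hk => ?_
    have hik : L i ∣ ∏ l ∈ Finset.univ.erase k, L l :=
      Finset.dvd_prod_of_mem _ (Finset.mem_erase.mpr ⟨(Finset.ne_of_mem_erase hk).symm, Finset.mem_univ _⟩)
    rw [Algebra.smul_def]
    exact (hik.trans (dvd_pow_self _ hj)).mul_left _
  have hself : L i ∣ f i • (∏ l ∈ Finset.univ.erase i, L l) ^ j := by
    rw [← Finset.add_sum_erase _ _ (Finset.mem_univ i)] at hf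
    exact (dvd_add_left hothers).mp (hf ▸ dvd_zero _)
  rw [Algebra.smul_def, ((IsUnit.mk0 _ hfi).map (algebraMap K A)).dvd_mul_left] at hself
  obtain ⟨k, hk, hik⟩ := (hL i).exists_mem_finset_dvd ((hL i).dvd_of_dvd_pow hself)
  exact Finset.ne_of_mem_erase hk (hdvd i k hik).symm

theorem Representation.apply_ne_zero {k G V : Type*} [Semiring k] [Group G] [AddCommMonoid V]
    [Module k V] (ρ : Representation k G V) (g : G) {v : V} (hv : v ≠ 0) : ρ g v ≠ 0 :=
  (map_ne_zero_iff _ (ρ.apply_bijective g).injective).mpr hv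

theorem Representation.eq_of_apply_out_eq_smul {k G V : Type*} [Semiring k] [Group G]
    [AddCommMonoid V] [Module k V] (ρ : Representation k G V) {Z : Subgroup G} {v : V}
    (hline : ∀ g : G, (∃ c : k, ρ g v = c • v) → g ∈ Z) {a b : G ⧸ Z} {c : k}
    (h : ρ b.out v = c • ρ a.out v) : a = b := by
  have hmem : a.out⁻¹ * b.out ∈ Z :=
    hline _ ⟨c, by rw [map_mul, Module.End.mul_apply, h, map_smul, ρ.inv_self_apply]⟩
  rw [← a.out_eq, ← b.out_eq]
  exact QuotientGroup.eq.mpr hmem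

theorem stmt1_general {F : Type*} [Field F] {n : ℕ}
    {G : Type*} [Group G]
    (ρ : Representation F G (Fin n → F))
    (Z : Subgroup G)
    [Fintype (G ⧸ Z)] [DecidableEq (G ⧸ Z)]
    (v : Fin n → F) (hv : v ≠ 0)
    (hline : ∀ g : G, (∃ c : F, ρ g v = c • v) → g ∈ Z)
    (j : ℕ) (hj : 1 ≤ j)
    (P : G ⧸ Z → MvPolynomial (Fin n) F)
    (hP : ∀ g : G ⧸ Z, P g = ∏ h ∈ Finset.univ.erase g, ∑ i, C (ρ h.out v i) * X i) :
    LinearIndependent F (fun g : G ⧸ Z => P g ^ j) := by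
  have hw : ∀ a : G ⧸ Z, ρ a.out v ≠ 0 := fun a => ρ.apply_ne_zero _ hv
  obtain rfl : P = fun a => ∏ b ∈ Finset.univ.erase a, linearForm (ρ b.out v) := funext hP
  refine linearIndependent_prod_erase_pow (fun a => prime_linearForm (hw a)) (fun a b hab => ?_)
    (Nat.one_le_iff_ne_zero.mp hj)
  obtain ⟨c, hc⟩ := exists_eq_smul_of_linearForm_dvd (hw a) (hw b) hab
  exact ρ.eq_of_apply_out_eq_smul hline hc

/-- Identifying `Sym^m(F^n)` with homogeneous polynomials of degree `m` in `x_1, ..., x_n`,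
where a vector `u` corresponds to the linear form `∑ i, u i * X i`: if `v` is a nonzero vector
whose line is fixed by no element of `G ∖ Z`, `Z = Z(GL(V)) ∩ G`, and
`P ḡ = ∏_{h̄ ∈ G/Z, h̄ ≠ ḡ} h̄(v)` (a product of linear forms, one for each coset other than
`ḡ`), then for every `j ≥ 1` the `|G/Z|` polynomials `P ḡ ^ j` are linearly independent. -/
theorem stmt1 {F : Type*} [Field F] [IsAlgClosed F] {n : ℕ}
    {G : Type*} [Group G] [Fintype G]
    (ρ : Representation F G (Fin n → F)) (hfaith : Function.Injective ρ)
    (Z : Subgroup G)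
    (hZ : ∀ g : G, g ∈ Z ↔ ∃ c : F, ρ g = c • (LinearMap.id : (Fin n → F) →ₗ[F] (Fin n → F)))
    [Fintype (G ⧸ Z)] [DecidableEq (G ⧸ Z)]
    (v : Fin n → F) (hv : v ≠ 0)
    (hline : ∀ g : G, (∃ c : F, ρ g v = c • v) → g ∈ Z)
    (j : ℕ) (hj : 1 ≤ j)
    (P : G ⧸ Z → MvPolynomial (Fin n) F)
    (hP : ∀ g : G ⧸ Z, P g = ∏ h ∈ Finset.univ.erase g, ∑ i, C (ρ h.out v i) * X i) :
    LinearIndependent F (fun g : G ⧸ Z => P g ^ j) :=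
  stmt1_general ρ Z v hv hline j hj P hP
end

section
/- Let F be algebraically closed, G a finite group acting faithfully on V with Z = Z(GL(V)) ∩ G, N = |G/Z| ≥ 2, λ the character of Z on V, and v a vector whose line has trivial stabilizer modulo Z. Then B_i := F · ∏_{h̄ ∈ G/Z} h̄(v)^i is a one-dimensional G-submodule of Sym^{Ni}(V) on which Z acts by λ^{Ni}. -/
open MvPolynomial

noncomputable section

/-- The action of `g ∈ G` on polynomials in `x_1, ..., x_n` induced by a linear action of `G`
on `F^n`, where a vector `u` corresponds to the linear form `∑ i, u i * X i`. -/
def polyAct {F : Type*} [Field F] {n : ℕ} {G : Type*} [Group G]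
    (ρ : Representation F G (Fin n → F)) (g : G) :
    MvPolynomial (Fin n) F →ₐ[F] MvPolynomial (Fin n) F :=
  aeval (fun i => ∑ k, C (ρ g (Pi.single i 1) k) * X k)

end

noncomputable def LF {F : Type*} [Field F] {n : ℕ} (u : Fin n → F) :
    MvPolynomial (Fin n) F := ∑ k, C (u k) * X k

theorem LF_ne {F : Type*} [Field F] {n : ℕ} {u : Fin n → F} (hu : u ≠ 0) : LF u ≠ 0 := by
  obtain ⟨k, hk⟩ := Function.ne_iff.mp hu
  intro h
  apply hk
  have := congrArg (MvPolynomial.coeff (Finsupp.single k 1)) h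
  simpa [LF, MvPolynomial.coeff_sum, MvPolynomial.coeff_X',
    Finsupp.single_left_inj] using this

theorem LF_hom {F : Type*} [Field F] {n : ℕ} (u : Fin n → F) : (LF u).IsHomogeneous 1 := by
  apply IsHomogeneous.sum
  intro k _
  simpa using (isHomogeneous_X F k).C_mul (u k)

theorem LF_smul {F : Type*} [Field F] {n : ℕ} (c : F) (u : Fin n → F) :
    LF (c • u) = C c * LF u := by
  simp [LF, Finset.mul_sum, mul_assoc]

theorem LF_act {F : Type*} [Field F] {n : ℕ} {G : Type*} [Group G]
    (ρ : Representation F G (Fin n → F)) (g : G) (u : Fin n → F) :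
    polyAct ρ g (LF u) = LF (ρ g u) := by
  have hu : ρ g u = ∑ k, u k • ρ g (Pi.single k 1) := by
    conv_lhs => rw [show u = ∑ k, u k • (Pi.single k 1 : Fin n → F) by
      simp [← Pi.single_smul, Finset.univ_sum_single]]
    simp
  simp only [LF, polyAct, map_sum, map_mul, aeval_C, aeval_X, algebraMap_eq, hu,
    Finset.sum_apply, Pi.smul_apply, smul_eq_mul, map_sum (C : F →+* MvPolynomial (Fin n) F),
    Finset.sum_mul, Finset.mul_sum, C_mul, mul_assoc]
  exact Finset.sum_comm

/-- In the polynomial model of symmetric powers, with `Z = Z(GL(V)) ∩ G` acting on `V` by the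
character `λ`, `N = |G/Z| ≥ 2` and `v` a vector whose line has trivial stabilizer modulo `Z`,
the polynomial `B = ∏_{h̄ ∈ G/Z} h̄(v)^i` is a nonzero homogeneous polynomial of degree `N·i`
spanning a `G`-stable line inside `Sym^{N i}(V)`, on which `Z` acts by `λ^{N i}`. -/
theorem stmt16 {F : Type*} [Field F] [IsAlgClosed F] {n : ℕ}
    {G : Type*} [Group G] [Fintype G]
    (ρ : Representation F G (Fin n → F)) (hfaith : Function.Injective ρ)
    (Z : Subgroup G)
    (hZ : ∀ g : G, g ∈ Z ↔ ∃ c : F, ρ g = c • (LinearMap.id : (Fin n → F) →ₗ[F] (Fin n → F)))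
    [Fintype (G ⧸ Z)] [DecidableEq (G ⧸ Z)]
    (lam : Z →* Fˣ)
    (hlam : ∀ z : Z, ρ (z : G) =
      ((lam z : Fˣ) : F) • (LinearMap.id : (Fin n → F) →ₗ[F] (Fin n → F)))
    (N : ℕ) (hN : N = Fintype.card (G ⧸ Z)) (hN2 : 2 ≤ N)
    (v : Fin n → F) (hv : v ≠ 0)
    (hline : ∀ g : G, (∃ c : F, ρ g v = c • v) → g ∈ Z)
    (i : ℕ)
    (B : MvPolynomial (Fin n) F)
    (hB : B = ∏ h : G ⧸ Z, (∑ k, C (ρ h.out v k) * X k) ^ i) :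
    B ≠ 0 ∧
    B.IsHomogeneous (N * i) ∧
    (∀ g : G, ∃ c : F, polyAct ρ g B = c • B) ∧
    (∀ z : Z, polyAct ρ (z : G) B = (((lam z : Fˣ) : F) ^ (N * i)) • B) := by
  have hB' : B = ∏ h : G ⧸ Z, (LF (ρ h.out v)) ^ i := hB
  have hρv : ∀ g : G, ρ g v ≠ 0 := by
    intro g h
    apply hv
    have h2 : ρ g⁻¹ (ρ g v) = v := by
      rw [← Module.End.mul_apply, ← map_mul, inv_mul_cancel, map_one, Module.End.one_apply]
    rw [h, map_zero] at h2
    exact h2.symm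
  have hmulv : ∀ a b : G, ρ (a * b) v = ρ a (ρ b v) := by
    intro a b; rw [map_mul]; rfl
  refine ⟨?_, ?_, ?_, ?_⟩
  · rw [hB']
    exact Finset.prod_ne_zero_iff.mpr fun h _ => pow_ne_zero _ (LF_ne (hρv _))
  · have h2 : B.IsHomogeneous (∑ _h : G ⧸ Z, i) := by
      rw [hB']
      exact IsHomogeneous.prod _ _ _ fun h _ => by simpa using (LF_hom _).pow i
    rwa [Finset.sum_const, smul_eq_mul, Finset.card_univ, ← hN] at h2
  · intro g
    have key : ∀ h : G ⧸ Z, ∃ c : F, ρ (g * h.out) v = c • ρ ((g • h).out) v := by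
      intro h
      have hz : ((g • h).out)⁻¹ * (g * h.out) ∈ Z := by
        rw [← QuotientGroup.eq, QuotientGroup.out_eq', ← smul_eq_mul,
          MulAction.Quotient.mk_smul_out]
      obtain ⟨c, hc⟩ := (hZ _).mp hz
      refine ⟨c, ?_⟩
      have hgh : g * h.out = (g • h).out * (((g • h).out)⁻¹ * (g * h.out)) := by group
      rw [hgh, hmulv, hc]
      simp
    choose c hc using key
    refine ⟨∏ h : G ⧸ Z, c h ^ i, ?_⟩
    have step1 : polyAct ρ g B = ∏ h : G ⧸ Z, (C (c h)) ^ i * (LF (ρ ((g • h).out) v)) ^ i := by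
      rw [hB', map_prod]
      refine Finset.prod_congr rfl fun h _ => ?_
      rw [map_pow, LF_act, ← hmulv, hc h, LF_smul, mul_pow]
    rw [step1, Finset.prod_mul_distrib]
    simp only [← C_pow]
    rw [← map_prod, MvPolynomial.smul_eq_C_mul]
    congr 1
    rw [hB']
    exact Fintype.prod_bijective (g • ·) (MulAction.bijective g) _ _ (fun x => rfl)
  · intro z
    have hzv : ∀ h : G ⧸ Z, ρ ((z : G)) (ρ h.out v) = ((lam z : Fˣ) : F) • ρ h.out v := by
      intro h; rw [hlam]; rfl
    rw [hB', map_prod]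
    have : ∀ h : G ⧸ Z, polyAct ρ (z : G) ((LF (ρ h.out v)) ^ i) =
        (C ((lam z : Fˣ) : F)) ^ i * (LF (ρ h.out v)) ^ i := by
      intro h
      rw [map_pow, LF_act, hzv, LF_smul, mul_pow]
    simp only [this]
    rw [Finset.prod_mul_distrib, Finset.prod_const, ← pow_mul, Finset.card_univ, ← hN,
      ← map_pow, MvPolynomial.smul_eq_C_mul, mul_comm i N]
end
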